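/- arXiv:2101.11494 — 8 statements merged into one kernel-verified Lean document; each statement's English description precedes it below -/
import Mathlib

section
/- Let κ be an uncountable cardinal, D a κ-complete ultrafilter on κ, and P a κ-cc partial order. Then the diagonal embedding of P into the ultrapower P^κ/D is a complete embedding: for every maximal antichain A of P and every function f : κ → P there exists p ∈ A such that {α < κ : f(α) and p are compatible in P} ∈ D; consequently, the set of classes of the constant functions with values in A is a maximal antichain of P^κ/D. -/
open Filter

/-!
Fix `f : κ → P`. If no member of the maximal antichain `A` were compatible with `f α` for
`D`-almost all `α`, then, `D` being an ultrafilter, each `p ∈ A` would be incompatible with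
`f α` for `D`-almost all `α`. As `|A| < κ`, the `κ`-completeness of `D` yields one `α` at which
`f α` is incompatible with every member of `A`, against maximality. Compatibility of `f` with `p`
`D`-almost everywhere is then exactly compatibility of `[f]` with the class of the constant `p`,
and incompatibility of constants transfers back to `P` because `D` is proper.
-/

/-- Two elements of a preorder are compatible if they have a common lower bound. -/
def Compat {Q : Type*} [Preorder Q] (p q : Q) : Prop := ∃ r, r ≤ p ∧ r ≤ q

/-- A maximal antichain: a set of pairwise incompatible elements such that every element
is compatible with some member. -/
def IsMaxAntichainP {Q : Type*} [Preorder Q] (A : Set Q) : Prop :=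
  (∀ p ∈ A, ∀ q ∈ A, p ≠ q → ¬ Compat p q) ∧ ∀ p : Q, ∃ q ∈ A, Compat p q

theorem Filter.Germ.compat_const_iff {ι Q : Type*} [Preorder Q] {l : Filter ι} [l.NeBot]
    {p q : Q} : Compat (p : Germ l Q) q ↔ Compat p q := by
  constructor
  · rintro ⟨r, hrp, hrq⟩
    induction r using Filter.Germ.inductionOn with
    | h g =>
      obtain ⟨i, hip, hiq⟩ := ((Germ.coe_le.1 hrp).and (Germ.coe_le.1 hrq)).exists
      exact ⟨g i, hip, hiq⟩
  · rintro ⟨r, hrp, hrq⟩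
    exact ⟨r, Germ.const_le hrp, Germ.const_le hrq⟩

theorem Filter.Germ.compat_const_of_eventually {ι Q : Type*} [Preorder Q] {l : Filter ι}
    {f : ι → Q} {p : Q} (h : ∀ᶠ i in l, Compat (f i) p) : Compat (f : Germ l Q) p := by
  have hchoice : ∀ i, ∃ r : Q, Compat (f i) p → r ≤ f i ∧ r ≤ p := fun i => by
    by_cases hi : Compat (f i) p
    · obtain ⟨r, hr⟩ := hi
      exact ⟨r, fun _ => hr⟩
    · exact ⟨f i, fun h' => absurd h' hi⟩
  choose r hr using hchoice
  exact ⟨r, Germ.coe_le.2 (h.mono fun i hi => (hr i hi).1),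
    Germ.coe_le.2 (h.mono fun i hi => (hr i hi).2)⟩

theorem Ultrafilter.exists_compat_mem_of_isMaxAntichainP {ι Q : Type u} [Preorder Q]
    (D : Ultrafilter ι) {c : Cardinal.{u}} [CardinalInterFilter (D : Filter ι) c]
    {A : Set Q} (hA : IsMaxAntichainP A) (hAc : Cardinal.mk A < c) (f : ι → Q) :
    ∃ p ∈ A, {i | Compat (f i) p} ∈ D := by
  by_contra! h
  have hincompat : ∀ p ∈ A, ∀ᶠ i in (D : Filter ι), ¬ Compat (f i) p :=
    fun p hp => Ultrafilter.eventually_not.2 (h p hp)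
  obtain ⟨i, hi⟩ := ((eventually_cardinal_ball hAc).2 hincompat).exists
  obtain ⟨p, hp, hcompat⟩ := hA.2 (f i)
  exact hi p hp hcompat

theorem isMaxAntichainP_image_germ_const {ι Q : Type*} [Preorder Q] {l : Filter ι} [l.NeBot]
    {A : Set Q} (hA : IsMaxAntichainP A) (hl : ∀ f : ι → Q, ∃ p ∈ A, {i | Compat (f i) p} ∈ l) :
    IsMaxAntichainP ((fun p : Q => (p : Germ l Q)) '' A) := by
  constructor
  · rintro _ ⟨p, hp, rfl⟩ _ ⟨q, hq, rfl⟩ hne hcompat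
    exact hA.1 p hp q hq (fun hpq => hne (congrArg _ hpq)) (Germ.compat_const_iff.1 hcompat)
  · intro x
    induction x using Filter.Germ.inductionOn with
    | h f =>
      obtain ⟨p, hp, hfp⟩ := hl f
      exact ⟨_, ⟨p, hp, rfl⟩, Germ.compat_const_of_eventually hfp⟩

theorem stmt_1_general {κ P : Type u} [PartialOrder P]
    (D : Ultrafilter κ)
    (hcomplete : ∀ S : Set (Set κ), Cardinal.mk S < Cardinal.mk κ →
      (∀ s ∈ S, s ∈ D) → ⋂₀ S ∈ D)
    (hcc : ∀ A : Set P, (∀ p ∈ A, ∀ q ∈ A, p ≠ q → ¬ Compat p q) →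
      Cardinal.mk A < Cardinal.mk κ)
    (A : Set P) (hA : IsMaxAntichainP A) :
    (∀ f : κ → P, ∃ p ∈ A, {α : κ | Compat (f α) p} ∈ D) ∧
      IsMaxAntichainP
        ((fun p : P => ((fun _ => p : κ → P) : Germ (D : Filter κ) P)) '' A) := by
  have : CardinalInterFilter (D : Filter κ) (Cardinal.mk κ) := ⟨hcomplete⟩
  have hcompat : ∀ f : κ → P, ∃ p ∈ A, {α : κ | Compat (f α) p} ∈ D :=
    D.exists_compat_mem_of_isMaxAntichainP hA (hcc A hA.1)
  exact ⟨hcompat, isMaxAntichainP_image_germ_const hA hcompat⟩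

/-- If `κ` is uncountable, `D` a `κ`-complete ultrafilter on `κ` and `P` is
`κ`-cc, then the diagonal embedding of `P` into `P^κ/D` is a complete embedding. -/
theorem stmt_1 {κ P : Type u} [PartialOrder P]
    (hκ : Cardinal.aleph0 < Cardinal.mk κ)
    (D : Ultrafilter κ)
    (hcomplete : ∀ S : Set (Set κ), Cardinal.mk S < Cardinal.mk κ →
      (∀ s ∈ S, s ∈ D) → ⋂₀ S ∈ D)
    (hcc : ∀ A : Set P, (∀ p ∈ A, ∀ q ∈ A, p ≠ q → ¬ Compat p q) →
      Cardinal.mk A < Cardinal.mk κ)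
    (A : Set P) (hA : IsMaxAntichainP A) :
    (∀ f : κ → P, ∃ p ∈ A, {α : κ | Compat (f α) p} ∈ D) ∧
      IsMaxAntichainP
        ((fun p : P => ((fun _ => p : κ → P) : Germ (D : Filter κ) P)) '' A) :=
  stmt_1_general D hcomplete hcc A hA
end

section
/- Let κ be an uncountable cardinal, D a nonprincipal κ-complete ultrafilter on κ, P a partial order, and A a maximal antichain of P of cardinality at least κ. Then there exists a function f : κ → P such that for every p ∈ A, {α < κ : f(α) and p are incompatible in P} ∈ D; in particular, the image of A under the diagonal embedding is not a maximal antichain of the ultrapower P^κ/D, so the diagonal embedding of P into P^κ/D is not a complete embedding. -/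
open Filter

/-- A maximal antichain: a set of pairwise incompatible elements such that every element
is compatible with some member. -/
def IsMaxAntichain' {Q : Type*} [Preorder Q] (A : Set Q) : Prop :=
  (∀ p ∈ A, ∀ q ∈ A, p ≠ q → ¬ Compat p q) ∧ ∀ p : Q, ∃ q ∈ A, Compat p q

/-!
Fix an injection `f : κ → A`. Nonprincipality makes every fibre of an injective map `D`-small, so
for each `p ∈ A` the value `f α` is, for `D`-almost all `α`, a member of `A` different from `p`,
hence incompatible with `p`. A common lower bound of `[f]` and the diagonal image of `p` would be
a lower bound of `f α` and `p` on a `D`-large, hence nonempty, set of coordinates.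
-/

theorem Ultrafilter.eventually_ne_of_injective {α β : Type*} {D : Ultrafilter α}
    (hnp : ∀ a, {a} ∉ D) {g : α → β} (hg : g.Injective) (b : β) :
    ∀ᶠ a in (D : Filter α), g a ≠ b := by
  refine Ultrafilter.eventually_not.mpr fun hb => ?_
  obtain ⟨a, ha⟩ := hb.exists
  exact hnp a (mem_of_superset hb fun a' ha' => hg (ha'.trans ha.symm))

theorem Filter.Germ.not_compat_coe_of_eventually {κ P : Type*} [Preorder P] {l : Filter κ}
    [l.NeBot] {f : κ → P} {p : P} (h : ∀ᶠ α in l, ¬ Compat (f α) p) :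
    ¬ Compat (f : Germ l P) (p : Germ l P) := by
  rintro ⟨r, hrf, hrp⟩
  induction r using Germ.inductionOn with
  | h r =>
    obtain ⟨α, hα₁, hα₂, hα₃⟩ := ((Germ.coe_le.mp hrf).and ((Germ.coe_le.mp hrp).and h)).exists
    exact hα₃ ⟨r α, hα₁, hα₂⟩

theorem stmt_2_general {κ P : Type u} [PartialOrder P]
    (D : Ultrafilter κ)
    (hnp : ∀ x : κ, {x} ∉ D)
    (A : Set P) (hA : IsMaxAntichain' A) (hbig : Cardinal.mk κ ≤ Cardinal.mk A) :
    (∃ f : κ → P, ∀ p ∈ A, {α : κ | ¬ Compat (f α) p} ∈ D) ∧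
      ¬ IsMaxAntichain'
        ((fun p : P => ((fun _ => p : κ → P) : Germ (D : Filter κ) P)) '' A) := by
  obtain ⟨g⟩ := hbig
  let f : κ → P := fun α => g α
  have hf : ∀ p ∈ A, ∀ᶠ α in (D : Filter κ), ¬ Compat (f α) p := fun p hp =>
    (D.eventually_ne_of_injective hnp (Subtype.val_injective.comp g.injective) p).mono
      fun α hne => hA.1 _ (g α).2 p hp hne
  refine ⟨⟨f, hf⟩, fun hmax => ?_⟩
  obtain ⟨_, ⟨p, hp, rfl⟩, hcompat⟩ := hmax.2 (f : Germ (D : Filter κ) P)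
  exact Germ.not_compat_coe_of_eventually (hf p hp) hcompat

/-- If `D` is a nonprincipal `κ`-complete ultrafilter on the uncountable
cardinal `κ` and `A` is a maximal antichain of `P` of size at least `κ`, then some class `[f]`
is incompatible with every member of `A`; hence the image of `A` under the diagonal embedding
is not a maximal antichain of `P^κ/D`. -/
theorem stmt_2 {κ P : Type u} [PartialOrder P]
    (hκ : Cardinal.aleph0 < Cardinal.mk κ)
    (D : Ultrafilter κ)
    (hcomplete : ∀ S : Set (Set κ), Cardinal.mk S < Cardinal.mk κ →
      (∀ s ∈ S, s ∈ D) → ⋂₀ S ∈ D)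
    (hnp : ∀ x : κ, {x} ∉ D)
    (A : Set P) (hA : IsMaxAntichain' A) (hbig : Cardinal.mk κ ≤ Cardinal.mk A) :
    (∃ f : κ → P, ∀ p ∈ A, {α : κ | ¬ Compat (f α) p} ∈ D) ∧
      ¬ IsMaxAntichain'
        ((fun p : P => ((fun _ => p : κ → P) : Germ (D : Filter κ) P)) '' A) :=
  stmt_2_general D hnp A hA hbig
end

section
/- Let κ be an uncountable cardinal, D a κ-complete ultrafilter on κ, ν an infinite cardinal with ν < κ, and P a ν-cc partial order. Then for every family (f_γ)_{γ<ν} of functions from κ to P there exist γ < δ < ν such that {α < κ : f_γ(α) and f_δ(α) are compatible in P} ∈ D; consequently the ultrapower P^κ/D is ν-cc, i.e., every antichain of P^κ/D has cardinality less than ν. -/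
open Filter

/-- If `D` is a `κ`-complete ultrafilter on the uncountable cardinal `κ`,
`ν < κ` is infinite (here `ν` is the cardinality of the linearly ordered index type `N`), and
`P` is `ν`-cc, then for any `ν` functions `κ → P` two of them are `D`-often compatible;
consequently the ultrapower `P^κ/D` is `ν`-cc. -/
theorem stmt_3 {κ N P : Type u} [LinearOrder N] [PartialOrder P]
    (hκ : Cardinal.aleph0 < Cardinal.mk κ)
    (hN : Cardinal.aleph0 ≤ Cardinal.mk N)
    (hνκ : Cardinal.mk N < Cardinal.mk κ)
    (D : Ultrafilter κ)
    (hcomplete : ∀ S : Set (Set κ), Cardinal.mk S < Cardinal.mk κ →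
      (∀ s ∈ S, s ∈ D) → ⋂₀ S ∈ D)
    (hcc : ∀ A : Set P, (∀ p ∈ A, ∀ q ∈ A, p ≠ q → ¬ Compat p q) →
      Cardinal.mk A < Cardinal.mk N) :
    (∀ f : N → κ → P, ∃ γ δ : N, γ < δ ∧ {α : κ | Compat (f γ α) (f δ α)} ∈ D) ∧
      ∀ A : Set (Germ (D : Filter κ) P),
        (∀ p ∈ A, ∀ q ∈ A, p ≠ q → ¬ Compat p q) → Cardinal.mk A < Cardinal.mk N := by
  have hmkNN : Cardinal.mk (N × N) = Cardinal.mk N := by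
    rw [Cardinal.mk_prod, Cardinal.lift_id, Cardinal.mul_eq_self hN]
  classical
  haveI : Nonempty κ := Cardinal.mk_ne_zero_iff.mp (Cardinal.aleph0_pos.trans hκ).ne'
  haveI : Nonempty N := Cardinal.mk_ne_zero_iff.mp
    (by rintro h; rw [h] at hN; exact (Cardinal.aleph0_pos).not_ge hN)
  have part1 : ∀ f : N → κ → P,
      ∃ γ δ : N, γ < δ ∧ {α : κ | Compat (f γ α) (f δ α)} ∈ D := by
    intro f
    by_contra h
    push_neg at h
    set g : N × N → Set κ := fun p => {α : κ | ¬ Compat (f p.1 α) (f p.2 α)} with hg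
    set S : Set (Set κ) := g '' {p : N × N | p.1 ≠ p.2} with hS
    have hSD : ∀ s ∈ S, s ∈ D := by
      rintro s ⟨⟨γ, δ⟩, hne, rfl⟩
      rw [show g (γ, δ) = {α : κ | Compat (f γ α) (f δ α)}ᶜ from rfl,
        Ultrafilter.compl_mem_iff_notMem]
      rcases lt_or_gt_of_ne hne with hlt | hgt
      · exact h γ δ hlt
      · have heq : {α : κ | Compat (f γ α) (f δ α)} = {α : κ | Compat (f δ α) (f γ α)} := by
          ext α
          exact ⟨fun ⟨r, h1, h2⟩ => ⟨r, h2, h1⟩, fun ⟨r, h1, h2⟩ => ⟨r, h2, h1⟩⟩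
        rw [heq]
        exact h δ γ hgt
    have hScard : Cardinal.mk S < Cardinal.mk κ := by
      calc Cardinal.mk S ≤ Cardinal.mk {p : N × N | p.1 ≠ p.2} := Cardinal.mk_image_le
        _ ≤ Cardinal.mk (N × N) := Cardinal.mk_set_le _
        _ = Cardinal.mk N := hmkNN
        _ < Cardinal.mk κ := hνκ
    obtain ⟨α, hα⟩ := Ultrafilter.nonempty_of_mem (hcomplete S hScard hSD)
    have hinj : Function.Injective (fun γ => f γ α) := by
      intro γ δ hEq
      by_contra hne
      have hmem : α ∈ g (γ, δ) := hα _ ⟨(γ, δ), hne, rfl⟩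
      have hEq' : f γ α = f δ α := hEq
      exact hmem ⟨f γ α, le_refl _, le_of_eq hEq'⟩
    have hanti : ∀ p ∈ Set.range (fun γ => f γ α), ∀ q ∈ Set.range (fun γ => f γ α),
        p ≠ q → ¬ Compat p q := by
      rintro p ⟨γ, rfl⟩ q ⟨δ, rfl⟩ hpq
      have hne : γ ≠ δ := fun hh => hpq (by rw [hh])
      exact hα _ ⟨(γ, δ), hne, rfl⟩
    have hlt := hcc _ hanti
    rw [Cardinal.mk_range_eq _ hinj] at hlt
    exact lt_irrefl _ hlt
  refine ⟨part1, ?_⟩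
  intro A hA
  by_contra hlt
  push_neg at hlt
  obtain ⟨e⟩ := (Cardinal.le_def _ _).mp hlt
  set f : N → κ → P := fun γ => Quotient.out ((e γ : Germ (D : Filter κ) P)) with hf
  have hcoe : ∀ γ : N, ((f γ : κ → P) : Germ (D : Filter κ) P) = (e γ : Germ (D : Filter κ) P) := by
    intro γ
    rw [hf]
    exact Quotient.out_eq _
  obtain ⟨γ, δ, hγδ, hE⟩ := part1 f
  have hPne : Nonempty P := ⟨f γ (Classical.arbitrary κ)⟩
  set p0 : P := hPne.some with hp0
  set r : κ → P := fun β => if hb : Compat (f γ β) (f δ β) then hb.choose else p0 with hr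
  have hrγ : (r : Germ (D : Filter κ) P) ≤ (f γ : κ → P) := by
    refine Filter.Germ.coe_le.mpr (Filter.eventually_of_mem hE fun β hb => ?_)
    have hb' : Compat (f γ β) (f δ β) := hb
    show (if hb : Compat (f γ β) (f δ β) then hb.choose else p0) ≤ f γ β
    rw [dif_pos hb']
    exact hb'.choose_spec.1
  have hrδ : (r : Germ (D : Filter κ) P) ≤ (f δ : κ → P) := by
    refine Filter.Germ.coe_le.mpr (Filter.eventually_of_mem hE fun β hb => ?_)
    have hb' : Compat (f γ β) (f δ β) := hb
    show (if hb : Compat (f γ β) (f δ β) then hb.choose else p0) ≤ f δ β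
    rw [dif_pos hb']
    exact hb'.choose_spec.2
  have hne : (e γ : Germ (D : Filter κ) P) ≠ (e δ : Germ (D : Filter κ) P) := by
    intro hh
    exact absurd (e.injective (Subtype.ext hh)) (ne_of_lt hγδ)
  exact hA _ (e γ).2 _ (e δ).2 hne ⟨r, hcoe γ ▸ hrγ, hcoe δ ▸ hrδ⟩
end

section
/- Let κ be an uncountable cardinal, D a nonprincipal κ-complete ultrafilter on κ, and P a partial order such that for every α < κ there is a maximal antichain of P of cardinality at least the cardinality of α. Then there is a family (f_γ)_{γ<κ} of functions from κ to P such that for all γ < δ < κ, {α < κ : f_γ(α) and f_δ(α) are compatible in P} ∉ D; hence the classes [f_γ], γ < κ, form an antichain of cardinality κ in the ultrapower P^κ/D, which is therefore not κ-cc. -/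
/-!
Index the coordinates by the initial ordinal of `κ`. At coordinate `β` pick an antichain
`A_β` of size at least `|[0, β]|` and an injection `[0, β] ↪ A_β`, and let `f_γ(β)` be the
image of `min γ β`. For `γ ≠ δ` and `β ≥ max γ δ` the values `f_γ(β)`, `f_δ(β)` are distinct
members of `A_β`, hence incompatible; so `f_γ` and `f_δ` are compatible only on an initial
segment, a set of size `< κ`. By `κ`-completeness and nonprincipality such sets are not in `D`.
-/

open Filter

/-- A maximal antichain: a set of pairwise incompatible elements such that every element
is compatible with some member. -/
def IsMaxIncompatAntichain {Q : Type*} [Preorder Q] (A : Set Q) : Prop :=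
  (∀ p ∈ A, ∀ q ∈ A, p ≠ q → ¬ Compat p q) ∧ ∀ p : Q, ∃ q ∈ A, Compat p q

open Cardinal Set

universe u

theorem compat_refl {Q : Type*} [Preorder Q] (p : Q) : Compat p p := ⟨p, le_rfl, le_rfl⟩

theorem Ultrafilter.infinite_of_forall_singleton_notMem {α : Type*} (D : Ultrafilter α)
    (hD : ∀ x, {x} ∉ D) : Infinite α := by
  by_contra hfin
  rw [not_infinite_iff_finite] at hfin
  obtain ⟨x, rfl⟩ := D.eq_pure_of_finite
  exact hD x rfl

theorem Ultrafilter.notMem_of_mk_lt {α : Type u} {D : Ultrafilter α}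
    (hcomplete : ∀ S : Set (Set α), #S < #α → (∀ s ∈ S, s ∈ D) → ⋂₀ S ∈ D)
    (hD : ∀ x, {x} ∉ D) {s : Set α} (hs : #s < #α) : s ∉ D := by
  have hcompl : ⋂₀ ((fun x => ({x}ᶜ : Set α)) '' s) ∈ D := by
    refine hcomplete _ (mk_image_le.trans_lt hs) ?_
    rintro _ ⟨x, -, rfl⟩
    exact compl_mem_iff_notMem.2 (hD x)
  refine compl_mem_iff_notMem.1 (mem_of_superset hcompl ?_)
  intro y hy hys
  exact hy _ ⟨y, hys, rfl⟩ rfl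

section DiagonalFamily

variable {ι P : Type*} [LinearOrder ι] [Preorder P] {A : ι → Set P}

def diagonalFamily (g : ∀ β, Iic β ↪ A β) (γ β : ι) : P := g β ⟨min γ β, min_le_right γ β⟩

theorem setOf_compat_diagonalFamily_subset (hA : ∀ β, (A β).Pairwise fun p q => ¬ Compat p q)
    (g : ∀ β, Iic β ↪ A β) {γ δ : ι} (hγδ : γ ≠ δ) :
    {β | Compat (diagonalFamily g γ β) (diagonalFamily g δ β)} ⊆ Iio (max γ δ) := by
  intro β hβ
  by_contra hlt
  have hβ_max : max γ δ ≤ β := not_lt.1 hlt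
  have hγ : min γ β = γ := min_eq_left (le_max_left γ δ |>.trans hβ_max)
  have hδ : min δ β = δ := min_eq_left (le_max_right γ δ |>.trans hβ_max)
  refine hA β (g β _).2 (g β _).2 (fun heq => hγδ ?_) hβ
  have : min γ β = min δ β := congrArg Subtype.val ((g β).injective (Subtype.ext heq))
  rwa [hγ, hδ] at this

end DiagonalFamily

theorem exists_family_mk_setOf_compat_lt {κ P : Type u} [Preorder P] [Infinite κ]
    (hP : ∀ c < #κ, ∃ A : Set P, (A.Pairwise fun p q => ¬ Compat p q) ∧ c ≤ #A) :
    ∃ f : κ → κ → P, ∀ γ δ, γ ≠ δ → #{α | Compat (f γ α) (f δ α)} < #κ := by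
  let ι := (#κ).ord.ToType
  have hι : #ι = #κ := mk_ord_toType _
  have hord : ord #ι = Ordinal.type (α := ι) (· < ·) := by simp [ι]
  obtain ⟨e⟩ : Nonempty (ι ≃ κ) := Cardinal.eq.1 hι
  choose A hA hAc using fun β : ι =>
    hP _ ((mk_Iic_lt β hord ((aleph0_le_mk κ).trans_eq hι.symm)).trans_eq hι)
  have g : ∀ β, Iic β ↪ A β := fun β => Classical.choice ((Cardinal.le_def _ _).1 (hAc β))
  refine ⟨fun γ α => diagonalFamily g (e.symm γ) (e.symm α), fun γ δ hγδ => ?_⟩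
  calc #{α | Compat (diagonalFamily g (e.symm γ) (e.symm α))
          (diagonalFamily g (e.symm δ) (e.symm α))}
      ≤ #{β | Compat (diagonalFamily g (e.symm γ) β) (diagonalFamily g (e.symm δ) β)} :=
        mk_preimage_of_injective _ _ e.symm.injective
    _ ≤ #(Iio (max (e.symm γ) (e.symm δ))) :=
        mk_le_mk_of_subset (setOf_compat_diagonalFamily_subset hA g (e.symm.injective.ne hγδ))
    _ < #κ := (mk_Iio_lt _ hord).trans_eq hι

namespace Filter.Germ

variable {α ι Q : Type*} [Preorder Q] {l : Filter α}

theorem eventually_compat_of_compat {f g : α → Q} (h : Compat (f : Germ l Q) g) :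
    ∀ᶠ a in l, Compat (f a) (g a) := by
  obtain ⟨r, hrf, hrg⟩ := h
  induction r using Germ.inductionOn with
  | h r => exact ((coe_le.1 hrf).and (coe_le.1 hrg)).mono fun a ha => ⟨r a, ha⟩

variable {f : ι → α → Q} (hf : ∀ γ δ, γ ≠ δ → {a | Compat (f γ a) (f δ a)} ∉ l)
include hf

theorem injective_coe_of_not_compat : Function.Injective fun γ => (f γ : Germ l Q) := by
  intro γ δ (heq : (f γ : Germ l Q) = f δ)
  by_contra hγδ
  exact hf γ δ hγδ (eventually_compat_of_compat (heq ▸ compat_refl _))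

theorem pairwise_not_compat_range_coe_of_not_compat :
    (range fun γ => (f γ : Germ l Q)).Pairwise fun p q => ¬ Compat p q := by
  rintro _ ⟨γ, rfl⟩ _ ⟨δ, rfl⟩ hne hcompat
  exact hf γ δ (fun h => hne (h ▸ rfl)) (eventually_compat_of_compat hcompat)

end Filter.Germ

theorem stmt_4_general {κ P : Type u} [LinearOrder κ] [PartialOrder P]
    (D : Ultrafilter κ)
    (hcomplete : ∀ S : Set (Set κ), Cardinal.mk S < Cardinal.mk κ →
      (∀ s ∈ S, s ∈ D) → ⋂₀ S ∈ D)
    (hnp : ∀ x : κ, {x} ∉ D)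
    (hP : ∀ c : Cardinal, c < Cardinal.mk κ →
      ∃ A : Set P, IsMaxIncompatAntichain A ∧ c ≤ Cardinal.mk A) :
    ∃ f : κ → κ → P,
      (∀ γ δ : κ, γ < δ → {α : κ | Compat (f γ α) (f δ α)} ∉ D) ∧
      (∀ p ∈ Set.range (fun γ : κ => ((f γ : κ → P) : Germ (D : Filter κ) P)),
        ∀ q ∈ Set.range (fun γ : κ => ((f γ : κ → P) : Germ (D : Filter κ) P)),
          p ≠ q → ¬ Compat p q) ∧
      Cardinal.mk (Set.range (fun γ : κ => ((f γ : κ → P) : Germ (D : Filter κ) P)))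
        = Cardinal.mk κ ∧
      ¬ (∀ A : Set (Germ (D : Filter κ) P),
          (∀ p ∈ A, ∀ q ∈ A, p ≠ q → ¬ Compat p q) → Cardinal.mk A < Cardinal.mk κ) := by
  have := D.infinite_of_forall_singleton_notMem hnp
  obtain ⟨f, hf⟩ := exists_family_mk_setOf_compat_lt fun c hc =>
    (hP c hc).imp fun A hA => ⟨hA.1.1, hA.2⟩
  have hD : ∀ γ δ : κ, γ ≠ δ → {α | Compat (f γ α) (f δ α)} ∉ D :=
    fun γ δ h => Ultrafilter.notMem_of_mk_lt hcomplete hnp (hf γ δ h)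
  have hanti := Germ.pairwise_not_compat_range_coe_of_not_compat (l := (D : Filter κ)) hD
  have hcard := mk_range_eq _ (Germ.injective_coe_of_not_compat (l := (D : Filter κ)) hD)
  exact ⟨f, fun γ δ h => hD γ δ h.ne, hanti, hcard, fun H => (H _ hanti).ne hcard⟩

/-- If `D` is a nonprincipal `κ`-complete ultrafilter on the uncountable
cardinal `κ` and `P` has maximal antichains of all sizes below `κ` (i.e. of size at least the
cardinality of each `α < κ`), then there is a family `(f_γ)_{γ<κ}` whose classes form an
antichain of size `κ` in `P^κ/D`; hence `P^κ/D` is not `κ`-cc. -/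
theorem stmt_4 {κ P : Type u} [LinearOrder κ] [PartialOrder P]
    (hκ : Cardinal.aleph0 < Cardinal.mk κ)
    (D : Ultrafilter κ)
    (hcomplete : ∀ S : Set (Set κ), Cardinal.mk S < Cardinal.mk κ →
      (∀ s ∈ S, s ∈ D) → ⋂₀ S ∈ D)
    (hnp : ∀ x : κ, {x} ∉ D)
    (hP : ∀ c : Cardinal, c < Cardinal.mk κ →
      ∃ A : Set P, IsMaxIncompatAntichain A ∧ c ≤ Cardinal.mk A) :
    ∃ f : κ → κ → P,
      (∀ γ δ : κ, γ < δ → {α : κ | Compat (f γ α) (f δ α)} ∉ D) ∧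
      (∀ p ∈ Set.range (fun γ : κ => ((f γ : κ → P) : Germ (D : Filter κ) P)),
        ∀ q ∈ Set.range (fun γ : κ => ((f γ : κ → P) : Germ (D : Filter κ) P)),
          p ≠ q → ¬ Compat p q) ∧
      Cardinal.mk (Set.range (fun γ : κ => ((f γ : κ → P) : Germ (D : Filter κ) P)))
        = Cardinal.mk κ ∧
      ¬ (∀ A : Set (Germ (D : Filter κ) P),
          (∀ p ∈ A, ∀ q ∈ A, p ≠ q → ¬ Compat p q) → Cardinal.mk A < Cardinal.mk κ) :=
  stmt_4_general D hcomplete hnp hP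
end

section
/- Let Q be a complete Boolean algebra, P a complete subalgebra of Q, h = h^Q_P the projection, κ an uncountable cardinal, and D a κ-complete ultrafilter on κ. Then for all f : κ → Q and g : κ → P: (a) {α < κ : f(α) ≤ g(α)} ∈ D if and only if {α < κ : h(f(α)) ≤ g(α)} ∈ D; and (b) {α < κ : g(α) ⊓ f(α) = ⊥} ∈ D if and only if {α < κ : g(α) ⊓ h(f(α)) = ⊥} ∈ D. Consequently: the class [h∘f] is the least class of a P-valued function lying above [f] in the ultrapower ordering (the projection of [f] to P^κ/D); the ultrapower P^κ/D completely embeds into Q^κ/D, i.e., every maximal antichain of P^κ/D remains a maximal antichain of Q^κ/D; and projections are correct: for every q ∈ Q, the projection of the class of the constant function with value q equals the class of the constant function with value h(q). -/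
open Filter

/-- A complete subalgebra of a complete Boolean algebra: contains `⊥` and `⊤` and is closed
under complementation and arbitrary suprema and infima as computed in the ambient algebra. -/
def IsCompleteSubalg {Q : Type u} [CompleteBooleanAlgebra Q] (S : Set Q) : Prop :=
  ⊥ ∈ S ∧ ⊤ ∈ S ∧ (∀ x ∈ S, xᶜ ∈ S) ∧ (∀ T ⊆ S, sSup T ∈ S) ∧ (∀ T ⊆ S, sInf T ∈ S)

/-- The projection to a complete subalgebra: `h(q) = inf {p ∈ S : q ≤ p}`. -/
noncomputable def proj {Q : Type u} [CompleteBooleanAlgebra Q] (S : Set Q) (q : Q) : Q :=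
  sInf {p | p ∈ S ∧ q ≤ p}

/-- The class of the constant function with value `q`. -/
def constG {κ Q : Type u} (D : Ultrafilter κ) (q : Q) : Germ (D : Filter κ) Q :=
  ((fun _ : κ => q : κ → Q) : Germ (D : Filter κ) Q)

/-- A class of the ultrapower is nonzero if it differs from the class of the constant `⊥`,
i.e. `{α : f α ≠ ⊥} ∈ D`. -/
def GermNonzero {κ Q : Type u} [CompleteBooleanAlgebra Q] (D : Ultrafilter κ)
    (x : Germ (D : Filter κ) Q) : Prop :=
  x ≠ constG D (⊥ : Q)

/-- Two classes are compatible if their pointwise meet is nonzero,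
i.e. `{α : f α ⊓ g α ≠ ⊥} ∈ D`. -/
def GermCompat {κ Q : Type u} [CompleteBooleanAlgebra Q] (D : Ultrafilter κ)
    (x y : Germ (D : Filter κ) Q) : Prop :=
  Germ.map₂ (· ⊓ ·) x y ≠ constG D (⊥ : Q)

/-- The subset of the ultrapower `Q^κ/D` consisting of classes of `S`-valued functions,
i.e. the ultrapower `P^κ/D` of the complete subalgebra `P = S`. -/
def SGerm {κ Q : Type u} [CompleteBooleanAlgebra Q] (D : Ultrafilter κ) (S : Set Q) :
    Set (Germ (D : Filter κ) Q) :=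
  {x | ∃ g : κ → Q, (∀ α, g α ∈ S) ∧ x = ((g : κ → Q) : Germ (D : Filter κ) Q)}

/-- A maximal antichain of a subset `T` of the ultrapower: a set of nonzero pairwise
incompatible classes from `T` such that every nonzero class of `T` is compatible with some
member. -/
def MaxAntichainIn {κ Q : Type u} [CompleteBooleanAlgebra Q] (D : Ultrafilter κ)
    (T : Set (Germ (D : Filter κ) Q)) (𝒜 : Set (Germ (D : Filter κ) Q)) : Prop :=
  𝒜 ⊆ T ∧ (∀ x ∈ 𝒜, GermNonzero D x) ∧
    (∀ x ∈ 𝒜, ∀ y ∈ 𝒜, x ≠ y → ¬ GermCompat D x y) ∧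
    ∀ x ∈ T, GermNonzero D x → ∃ y ∈ 𝒜, GermCompat D x y

section Aux

variable {Q : Type u} [CompleteBooleanAlgebra Q] {S : Set Q}

theorem proj_mem (hS : IsCompleteSubalg S) (q : Q) : proj S q ∈ S :=
  hS.2.2.2.2 _ (fun _ hp => hp.1)

theorem le_proj (q : Q) : q ≤ proj S q :=
  le_sInf (fun _ hp => hp.2)

theorem proj_le {p q : Q} (hp : p ∈ S) (h : q ≤ p) : proj S q ≤ p :=
  sInf_le ⟨hp, h⟩

theorem le_iff_proj_le {p q : Q} (hp : p ∈ S) : q ≤ p ↔ proj S q ≤ p :=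
  ⟨proj_le hp, fun h => le_trans (le_proj q) h⟩

theorem inf_eq_bot_iff_proj (hS : IsCompleteSubalg S) {p q : Q} (hp : p ∈ S) :
    p ⊓ q = ⊥ ↔ p ⊓ proj S q = ⊥ := by
  have hpc : pᶜ ∈ S := hS.2.2.1 p hp
  have h1 : p ⊓ q = ⊥ ↔ q ≤ pᶜ := by
    rw [← disjoint_iff, disjoint_comm, ← le_compl_iff_disjoint_right]
  have h2 : p ⊓ proj S q = ⊥ ↔ proj S q ≤ pᶜ := by
    rw [← disjoint_iff, disjoint_comm, ← le_compl_iff_disjoint_right]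
  rw [h1, h2, le_iff_proj_le hpc]

theorem nonzero_iff {κ : Type u} (D : Ultrafilter κ) (f : κ → Q) :
    GermNonzero D (f : Filter.Germ (D : Filter κ) Q) ↔ {α | f α ≠ ⊥} ∈ D := by
  unfold GermNonzero constG
  rw [Ne, Filter.Germ.coe_eq]
  have : (f =ᶠ[(D : Filter κ)] fun _ => ⊥) ↔ {α | f α = ⊥} ∈ D := Iff.rfl
  rw [this]
  rw [← Ultrafilter.compl_mem_iff_notMem]
  rfl

theorem compat_iff {κ : Type u} (D : Ultrafilter κ) (f g : κ → Q) :
    GermCompat D (f : Filter.Germ (D : Filter κ) Q) (g : Filter.Germ (D : Filter κ) Q) ↔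
      {α | f α ⊓ g α ≠ ⊥} ∈ D := by
  unfold GermCompat
  rw [Filter.Germ.map₂_coe]
  exact nonzero_iff D _

end Aux

/-- Behaviour of the projection `h = h^Q_P` under ultrapowers. -/
theorem stmt_5 {κ Q : Type u} [CompleteBooleanAlgebra Q]
    (S : Set Q) (hS : IsCompleteSubalg S)
    (hκ : Cardinal.aleph0 < Cardinal.mk κ)
    (D : Ultrafilter κ)
    (hcomplete : ∀ 𝒮 : Set (Set κ), Cardinal.mk 𝒮 < Cardinal.mk κ →
      (∀ s ∈ 𝒮, s ∈ D) → ⋂₀ 𝒮 ∈ D) :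
    -- (a) and (b)
    (∀ f g : κ → Q, (∀ α, g α ∈ S) →
      (({α : κ | f α ≤ g α} ∈ D ↔ {α : κ | proj S (f α) ≤ g α} ∈ D) ∧
       ({α : κ | g α ⊓ f α = ⊥} ∈ D ↔ {α : κ | g α ⊓ proj S (f α) = ⊥} ∈ D))) ∧
    -- [h ∘ f] is the least class of an S-valued function lying above [f]
    (∀ f : κ → Q,
      (∀ α, proj S (f α) ∈ S) ∧
      ((f : Germ (D : Filter κ) Q) ≤
        ((fun α => proj S (f α) : κ → Q) : Germ (D : Filter κ) Q)) ∧
      ∀ g : κ → Q, (∀ α, g α ∈ S) →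
        (f : Germ (D : Filter κ) Q) ≤ ((g : κ → Q) : Germ (D : Filter κ) Q) →
        ((fun α => proj S (f α) : κ → Q) : Germ (D : Filter κ) Q) ≤
          ((g : κ → Q) : Germ (D : Filter κ) Q)) ∧
    -- P^κ/D completely embeds into Q^κ/D
    (∀ 𝒜 : Set (Germ (D : Filter κ) Q), MaxAntichainIn D (SGerm D S) 𝒜 →
      ∀ x : Germ (D : Filter κ) Q, GermNonzero D x → ∃ y ∈ 𝒜, GermCompat D x y) ∧
    -- correctness: the projection of the class of the constant `q` is the class of the
    -- constant `h q`
    (∀ q : Q,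
      constG D (proj S q) ∈ SGerm D S ∧
      constG D q ≤ constG D (proj S q) ∧
      ∀ y ∈ SGerm D S, constG D q ≤ y → constG D (proj S q) ≤ y) := by
  have key1 : ∀ f g : κ → Q, (∀ α, g α ∈ S) →
      {α : κ | f α ≤ g α} = {α : κ | proj S (f α) ≤ g α} := by
    intro f g hg; ext α; exact le_iff_proj_le (hg α)
  have key2 : ∀ f g : κ → Q, (∀ α, g α ∈ S) →
      {α : κ | g α ⊓ f α = ⊥} = {α : κ | g α ⊓ proj S (f α) = ⊥} := by
    intro f g hg; ext α; exact inf_eq_bot_iff_proj hS (hg α)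
  refine ⟨?_, ?_, ?_, ?_⟩
  · intro f g hg
    rw [key1 f g hg, key2 f g hg]
    exact ⟨Iff.rfl, Iff.rfl⟩
  · intro f
    refine ⟨fun α => proj_mem hS _, ?_, ?_⟩
    · rw [Filter.Germ.coe_le]
      exact Filter.Eventually.of_forall fun α => le_proj _
    · intro g hg hle
      rw [Filter.Germ.coe_le] at hle ⊢
      exact hle.mono fun α h => (le_iff_proj_le (hg α)).mp h
  · intro 𝒜 h𝒜 x hx
    induction x using Filter.Germ.inductionOn with
    | h f =>
      have hnz : {α | f α ≠ ⊥} ∈ D := (nonzero_iff D f).mp hx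
      have hfS : ((fun α => proj S (f α) : κ → Q) : Filter.Germ (D : Filter κ) Q) ∈
          SGerm D S := ⟨_, fun α => proj_mem hS _, rfl⟩
      have hnz' : GermNonzero D ((fun α => proj S (f α) : κ → Q) :
          Filter.Germ (D : Filter κ) Q) := by
        rw [nonzero_iff]
        exact Filter.mem_of_superset hnz fun α h hb => h (le_bot_iff.mp (hb ▸ le_proj (f α)))
      obtain ⟨y, hy, hcy⟩ := h𝒜.2.2.2 _ hfS hnz'
      refine ⟨y, hy, ?_⟩
      obtain ⟨g, hgS, rfl⟩ := h𝒜.1 hy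
      rw [compat_iff] at hcy ⊢
      refine Filter.mem_of_superset hcy fun α h hb => h ?_
      rw [inf_comm, ← inf_eq_bot_iff_proj hS (hgS α), inf_comm]
      exact hb
  · intro q
    refine ⟨⟨_, fun _ => proj_mem hS q, rfl⟩, ?_, ?_⟩
    · rw [constG, constG, Filter.Germ.coe_le]
      exact Filter.Eventually.of_forall fun α => le_proj q
    · rintro y ⟨g, hgS, rfl⟩ hle
      rw [constG, Filter.Germ.coe_le] at hle ⊢
      exact hle.mono fun α h => (le_iff_proj_le (hgS α)).mp h
end

section
/- Let κ be an uncountable cardinal, B a complete Boolean algebra, D a κ-complete ultrafilter on B, ν an infinite cardinal with ν < κ, and P a ν-cc partial order. Let C be a maximal antichain of B and let f_γ : C → P for γ < ν be any functions. Then there exist γ < δ < ν such that sup{b ∈ C : f_γ(b) and f_δ(b) are compatible in P} ∈ D. (This is the key step showing that the Boolean ultrapower Ult_D(P, B) is ν-cc; by <κ-distributivity of B, fewer than κ many maximal antichains of B may be assumed to have the common refinement C.) -/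
/-- An ultrafilter on a complete Boolean algebra. -/
def IsUltrafilterOn {B : Type u} [CompleteBooleanAlgebra B] (D : Set B) : Prop :=
  (⊥ : B) ∉ D ∧ (∀ a ∈ D, ∀ b : B, a ≤ b → b ∈ D) ∧
    (∀ a ∈ D, ∀ b ∈ D, a ⊓ b ∈ D) ∧ ∀ b : B, b ∈ D ∨ bᶜ ∈ D

/-- A maximal antichain of a complete Boolean algebra. -/
def IsMaxAntichainCBA {B : Type u} [CompleteBooleanAlgebra B] (C : Set B) : Prop :=
  (⊥ : B) ∉ C ∧ (∀ b ∈ C, ∀ b' ∈ C, b ≠ b' → b ⊓ b' = ⊥) ∧ sSup C = ⊤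

/-- Key step showing that the Boolean ultrapower `Ult_D(P, B)` of a `ν`-cc
partial order is `ν`-cc (here `ν` is the cardinality of the infinite linearly ordered index
type `N`). -/
theorem stmt_10 {B P : Type u} [CompleteBooleanAlgebra B] [PartialOrder P] {N : Type u}
    [LinearOrder N]
    (κ : Cardinal.{u}) (hκ : Cardinal.aleph0 < κ)
    (D : Set B) (hD : IsUltrafilterOn D)
    (hcomplete : ∀ T ⊆ D, Cardinal.mk T < κ → sInf T ∈ D)
    (hN : Cardinal.aleph0 ≤ Cardinal.mk N) (hνκ : Cardinal.mk N < κ)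
    (hcc : ∀ A : Set P, (∀ p ∈ A, ∀ q ∈ A, p ≠ q → ¬ Compat p q) →
      Cardinal.mk A < Cardinal.mk N)
    (C : Set B) (hC : IsMaxAntichainCBA C)
    (f : N → B → P) :
    ∃ γ δ : N, γ < δ ∧ sSup {b | b ∈ C ∧ Compat (f γ b) (f δ b)} ∈ D := by
  by_contra h
  push_neg at h
  obtain ⟨hbot, hup, hmeet, hultra⟩ := hD
  have hcompl : ∀ γ δ : N, γ < δ →
      (sSup {b | b ∈ C ∧ Compat (f γ b) (f δ b)})ᶜ ∈ D := by
    intro γ δ hγδ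
    rcases hultra (sSup {b | b ∈ C ∧ Compat (f γ b) (f δ b)}) with h1 | h1
    · exact absurd h1 (h γ δ hγδ)
    · exact h1
  set T : Set B :=
    {x | ∃ γ δ : N, γ < δ ∧ x = (sSup {b | b ∈ C ∧ Compat (f γ b) (f δ b)})ᶜ} with hT
  have hTD : T ⊆ D := by
    rintro x ⟨γ, δ, hγδ, rfl⟩
    exact hcompl γ δ hγδ
  have hTcard : Cardinal.mk T < κ := by
    have h1 : T ⊆ Set.range (fun p : N × N =>
        (sSup {b | b ∈ C ∧ Compat (f p.1 b) (f p.2 b)})ᶜ) := by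
      rintro x ⟨γ, δ, _, rfl⟩
      exact ⟨(γ, δ), rfl⟩
    have h2 : Cardinal.mk T ≤ Cardinal.mk (N × N) :=
      (Cardinal.mk_le_mk_of_subset h1).trans Cardinal.mk_range_le
    have h3 : Cardinal.mk (N × N) = Cardinal.mk N := by
      rw [Cardinal.mk_prod]
      simpa using Cardinal.mul_eq_self hN
    exact lt_of_le_of_lt (h2.trans h3.le) hνκ
  have hdD : sInf T ∈ D := hcomplete T hTD hTcard
  set d := sInf T with hd
  have hdne : d ≠ ⊥ := fun hh => hbot (hh ▸ hdD)
  -- find b ∈ C with d ⊓ b ≠ ⊥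
  have hb : ∃ b ∈ C, d ⊓ b ≠ ⊥ := by
    by_contra hball
    push_neg at hball
    apply hdne
    have : d = d ⊓ sSup C := by rw [hC.2.2, inf_top_eq]
    rw [this, inf_sSup_eq]
    simp only [iSup_eq_bot]
    intro b
    exact fun hbC => hball b hbC
  obtain ⟨b, hbC, hbne⟩ := hb
  have key : ∀ γ δ : N, γ < δ → ¬ Compat (f γ b) (f δ b) := by
    intro γ δ hγδ hcompat
    apply hbne
    have h1 : b ≤ sSup {b' | b' ∈ C ∧ Compat (f γ b') (f δ b')} :=
      le_sSup ⟨hbC, hcompat⟩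
    have h2 : d ≤ (sSup {b' | b' ∈ C ∧ Compat (f γ b') (f δ b')})ᶜ :=
      sInf_le ⟨γ, δ, hγδ, rfl⟩
    have : d ⊓ b ≤ (sSup {b' | b' ∈ C ∧ Compat (f γ b') (f δ b')})ᶜ ⊓
        sSup {b' | b' ∈ C ∧ Compat (f γ b') (f δ b')} := inf_le_inf h2 h1
    rw [compl_inf_eq_bot] at this
    exact le_bot_iff.mp this
  have key' : ∀ γ δ : N, γ ≠ δ → ¬ Compat (f γ b) (f δ b) := by
    intro γ δ hne hcompat
    rcases lt_or_gt_of_ne hne with hlt | hgt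
    · exact key γ δ hlt hcompat
    · exact key δ γ hgt ⟨hcompat.choose, hcompat.choose_spec.2, hcompat.choose_spec.1⟩
  set A : Set P := Set.range (fun γ => f γ b) with hA
  have hanti : ∀ p ∈ A, ∀ q ∈ A, p ≠ q → ¬ Compat p q := by
    rintro p ⟨γ, rfl⟩ q ⟨δ, rfl⟩ hpq
    exact key' γ δ (fun he => hpq (by rw [he]))
  have hinj : Function.Injective (fun γ : N => (⟨f γ b, ⟨γ, rfl⟩⟩ : A)) := by
    intro γ δ heq
    by_contra hne
    have heq' : f γ b = f δ b := congrArg Subtype.val heq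
    exact key' γ δ hne ⟨f γ b, le_refl _, heq'.le⟩
  have := (Cardinal.mk_le_of_injective hinj).trans_lt (hcc A hanti)
  exact lt_irrefl _ this
end

section
/- Let κ be a regular uncountable cardinal, μ an ordinal, and ν a cardinal with ν < κ. For each ξ < ν let A_ξ be a maximal antichain of Fn(μ, κ, <κ), let w_ξ : A_ξ → κ, and let δ_ξ < μ be such that β < δ_ξ for every a ∈ A_ξ and every β ∈ dom(a). Then there exists q ∈ Fn(μ, κ, <κ) such that for every ξ < ν there is a ∈ A_ξ with a ⊆ q, δ_ξ ∈ dom(q), and q(δ_ξ) > w_ξ(a). -/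
/-- A condition in `Fn(μ, κ, <κ)`: a partial function from `μ` to `κ` (coded as a functional
set of pairs of ordinals) whose domain has cardinality less than `κ`. -/
def IsCond (μ : Ordinal.{0}) (κ : Cardinal.{0}) (p : Set (Ordinal.{0} × Ordinal.{0})) : Prop :=
  (∀ x ∈ p, x.1 < μ ∧ x.2 < κ.ord) ∧
  (∀ x ∈ p, ∀ y ∈ p, x.1 = y.1 → x.2 = y.2) ∧
  Cardinal.mk p < Cardinal.lift.{1} κ

/-- Two conditions are compatible iff their union is a function. -/
def CondCompat (p q : Set (Ordinal.{0} × Ordinal.{0})) : Prop :=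
  ∀ x ∈ p, ∀ y ∈ q, x.1 = y.1 → x.2 = y.2

/-- A maximal antichain of `Fn(μ, κ, <κ)`. -/
def IsMaxAntichainFn (μ : Ordinal.{0}) (κ : Cardinal.{0})
    (A : Set (Set (Ordinal.{0} × Ordinal.{0}))) : Prop :=
  (∀ p ∈ A, IsCond μ κ p) ∧
  (∀ p ∈ A, ∀ q ∈ A, p ≠ q → ¬ CondCompat p q) ∧
  ∀ p, IsCond μ κ p → ∃ a ∈ A, CondCompat p a

noncomputable section Stmt11Aux

open Cardinal Set Order
open scoped Classical

variable {N : Type}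

/-- A well-order on the index type refining the ordering by `δ`. -/
def srel (δ : N → Ordinal.{0}) (ξ η : N) : Prop :=
  Prod.Lex (· < ·) WellOrderingRel (δ ξ, ξ) (δ η, η)

theorem srel_wf (δ : N → Ordinal.{0}) : WellFounded (srel δ) :=
  InvImage.wf (fun ξ => (δ ξ, ξ))
    (WellFounded.prod_lex Ordinal.lt_wf (IsWellFounded.wf (r := WellOrderingRel)))

theorem srel_of_lt {δ : N → Ordinal.{0}} {ξ η : N} (h : δ ξ < δ η) : srel δ ξ η :=
  Prod.Lex.left _ _ h

theorem srel_tri {δ : N → Ordinal.{0}} {ξ η : N} (h : ξ ≠ η) : srel δ ξ η ∨ srel δ η ξ := by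
  rcases lt_trichotomy (δ ξ) (δ η) with h1 | h1 | h1
  · exact Or.inl (srel_of_lt h1)
  · rcases trichotomous_of WellOrderingRel ξ η with h2 | h2 | h2
    · refine Or.inl ?_
      unfold srel
      rw [h1]
      exact Prod.Lex.right _ h2
    · exact absurd h2 h
    · refine Or.inr ?_
      unfold srel
      rw [h1]
      exact Prod.Lex.right _ h2
  · exact Or.inr (srel_of_lt h1)

/-- The intended value at coordinate `d`: a strict upper bound for all relevant `w`-values. -/
def vOf (w : N → Set (Ordinal.{0} × Ordinal.{0}) → Ordinal.{0}) (δ : N → Ordinal.{0})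
    (f : N → Set (Ordinal.{0} × Ordinal.{0})) (d : Ordinal.{0}) : Ordinal.{0} :=
  ⨆ η : {η : N // δ η = d}, Order.succ (w η.1 (f η.1))

/-- The accumulated condition at stage `ξ`. -/
def POf (w : N → Set (Ordinal.{0} × Ordinal.{0}) → Ordinal.{0}) (δ : N → Ordinal.{0})
    (f : N → Set (Ordinal.{0} × Ordinal.{0})) (ξ : N) : Set (Ordinal.{0} × Ordinal.{0}) :=
  (⋃ η : {η : N // srel δ η ξ}, f η.1) ∪
    ((fun η => (δ η, vOf w δ f (δ η))) '' {η | δ η < δ ξ})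

theorem vOf_congr {w : N → Set (Ordinal.{0} × Ordinal.{0}) → Ordinal.{0}} {δ : N → Ordinal.{0}}
    {f g : N → Set (Ordinal.{0} × Ordinal.{0})} {d : Ordinal.{0}}
    (h : ∀ η, δ η = d → f η = g η) : vOf w δ f d = vOf w δ g d := by
  unfold vOf
  congr 1
  funext η
  rw [h η.1 η.2]

theorem POf_congr {w : N → Set (Ordinal.{0} × Ordinal.{0}) → Ordinal.{0}} {δ : N → Ordinal.{0}}
    {f g : N → Set (Ordinal.{0} × Ordinal.{0})} {ξ : N}
    (h : ∀ η, srel δ η ξ → f η = g η) : POf w δ f ξ = POf w δ g ξ := by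
  unfold POf
  congr 1
  · exact Set.iUnion_congr fun η => h η.1 η.2
  · apply Set.image_congr
    intro η hη
    have hv : vOf w δ f (δ η) = vOf w δ g (δ η) :=
      vOf_congr fun η' h' => h η' (srel_of_lt (by rw [h']; exact hη))
    rw [hv]

/-- One step of the construction. -/
def aBody (A : N → Set (Set (Ordinal.{0} × Ordinal.{0})))
    (w : N → Set (Ordinal.{0} × Ordinal.{0}) → Ordinal.{0}) (δ : N → Ordinal.{0})
    (ξ : N) (f : N → Set (Ordinal.{0} × Ordinal.{0})) : Set (Ordinal.{0} × Ordinal.{0}) :=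
  if h : ∃ x ∈ A ξ, CondCompat (POf w δ f ξ) x then h.choose else ∅

theorem aBody_congr {A : N → Set (Set (Ordinal.{0} × Ordinal.{0}))}
    {w : N → Set (Ordinal.{0} × Ordinal.{0}) → Ordinal.{0}} {δ : N → Ordinal.{0}} {ξ : N}
    {f g : N → Set (Ordinal.{0} × Ordinal.{0})}
    (h : ∀ η, srel δ η ξ → f η = g η) : aBody A w δ ξ f = aBody A w δ ξ g := by
  unfold aBody
  rw [POf_congr h]

/-- The recursively chosen members of the antichains. -/
def aFam (A : N → Set (Set (Ordinal.{0} × Ordinal.{0})))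
    (w : N → Set (Ordinal.{0} × Ordinal.{0}) → Ordinal.{0}) (δ : N → Ordinal.{0}) :
    N → Set (Ordinal.{0} × Ordinal.{0}) :=
  (srel_wf δ).fix fun ξ ih =>
    aBody A w δ ξ (fun η => if hh : srel δ η ξ then ih η hh else ∅)

theorem aFam_eq (A : N → Set (Set (Ordinal.{0} × Ordinal.{0})))
    (w : N → Set (Ordinal.{0} × Ordinal.{0}) → Ordinal.{0}) (δ : N → Ordinal.{0}) (ξ : N) :
    aFam A w δ ξ = aBody A w δ ξ (aFam A w δ) := by
  conv_lhs => rw [aFam]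
  rw [WellFounded.fix_eq]
  exact aBody_congr fun η hh => by rw [dif_pos hh]; rfl

theorem isRegular_lift {κ : Cardinal.{0}} (h : κ.IsRegular) :
    (Cardinal.lift.{1} κ).IsRegular := by
  constructor
  · exact Cardinal.aleph0_le_lift.2 h.1
  · rw [← Cardinal.lift_ord, ← Ordinal.lift_cof]
    exact Cardinal.lift_le.2 h.2

section Main

variable (κ : Cardinal.{0}) (μ : Ordinal.{0})
  (A : N → Set (Set (Ordinal.{0} × Ordinal.{0})))
  (w : N → Set (Ordinal.{0} × Ordinal.{0}) → Ordinal.{0})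
  (δ : N → Ordinal.{0})

theorem vOf_lt (hreg : κ.IsRegular) (hν : Cardinal.mk N < κ)
    (hw : ∀ ξ, ∀ a ∈ A ξ, w ξ a < κ.ord)
    {a : N → Set (Ordinal.{0} × Ordinal.{0})} {d : Ordinal.{0}}
    (hmem : ∀ η, δ η = d → a η ∈ A η) : vOf w δ a d < κ.ord :=
  Cardinal.iSup_lt_ord_of_isRegular hreg (lt_of_le_of_lt (Cardinal.mk_subtype_le _) hν)
    fun η => (Cardinal.isSuccLimit_ord hreg.1).succ_lt (hw η.1 _ (hmem η.1 η.2))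

theorem card_iUnion_lt (hreg : κ.IsRegular) (hν : Cardinal.mk N < κ)
    (hA : ∀ ξ, IsMaxAntichainFn μ κ (A ξ))
    {a : N → Set (Ordinal.{0} × Ordinal.{0})} {s : Set N} (hmem : ∀ η ∈ s, a η ∈ A η) :
    Cardinal.mk (⋃ η : s, a η.1) < Cardinal.lift.{1} κ := by
  have hlreg : (Cardinal.lift.{1} κ).IsRegular := isRegular_lift hreg
  have h1 : Cardinal.mk (⋃ η : s, a η.1) ≤
      Cardinal.lift.{1} (Cardinal.mk s) * ⨆ η : s, Cardinal.lift.{0} (Cardinal.mk (a η.1)) := by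
    have := Cardinal.mk_iUnion_le_lift (fun η : s => a η.1)
    rwa [Cardinal.lift_uzero] at this
  have hs : Cardinal.lift.{1} (Cardinal.mk s) < Cardinal.lift.{1} κ :=
    Cardinal.lift_lt.2 (lt_of_le_of_lt (Cardinal.mk_subtype_le _) hν)
  refine lt_of_le_of_lt h1 (Cardinal.mul_lt_of_lt hlreg.1 hs ?_)
  refine Cardinal.iSup_lt_lift_of_isRegular hlreg ?_ ?_
  · exact lt_of_le_of_lt (Cardinal.lift_le.2 (Cardinal.mk_subtype_le _)) (Cardinal.lift_lt.2 hν)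
  · intro η
    rw [Cardinal.lift_uzero]
    exact ((hA η.1).1 _ (hmem η.1 η.2)).2.2

theorem pair_compat (hA : ∀ ξ, IsMaxAntichainFn μ κ (A ξ))
    {a : N → Set (Ordinal.{0} × Ordinal.{0})} {ξ η : N}
    (h1 : a ξ ∈ A ξ ∧ CondCompat (POf w δ a ξ) (a ξ))
    (h2 : a η ∈ A η ∧ CondCompat (POf w δ a η) (a η)) :
    ∀ x ∈ a ξ, ∀ y ∈ a η, x.1 = y.1 → x.2 = y.2 := by
  intro x hx y hy hxy
  rcases eq_or_ne ξ η with rfl | hne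
  · exact ((hA ξ).1 _ h1.1).2.1 x hx y hy hxy
  rcases srel_tri (δ := δ) hne with h | h
  · exact h2.2 x (Set.mem_union_left _ (Set.mem_iUnion.2 ⟨⟨ξ, h⟩, hx⟩)) y hy hxy
  · exact (h1.2 y (Set.mem_union_left _ (Set.mem_iUnion.2 ⟨⟨η, h⟩, hy⟩)) x hx hxy.symm).symm

theorem mixed_compat (hδ : ∀ ξ, ∀ a ∈ A ξ, ∀ x ∈ a, x.1 < δ ξ)
    {a : N → Set (Ordinal.{0} × Ordinal.{0})} {ξ η : N}
    (h1 : a ξ ∈ A ξ ∧ CondCompat (POf w δ a ξ) (a ξ)) :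
    ∀ y ∈ a ξ, y.1 = δ η → y.2 = vOf w δ a (δ η) := by
  intro y hy h
  have hlt : δ η < δ ξ := h ▸ hδ ξ _ h1.1 y hy
  have hx : (δ η, vOf w δ a (δ η)) ∈ POf w δ a ξ :=
    Set.mem_union_right _ ⟨η, hlt, rfl⟩
  exact (h1.2 _ hx y hy h.symm).symm

theorem isCond_POf (hreg : κ.IsRegular) (hν : Cardinal.mk N < κ)
    (hA : ∀ ξ, IsMaxAntichainFn μ κ (A ξ)) (hw : ∀ ξ, ∀ a ∈ A ξ, w ξ a < κ.ord)
    (hδμ : ∀ ξ, δ ξ < μ) (hδ : ∀ ξ, ∀ a ∈ A ξ, ∀ x ∈ a, x.1 < δ ξ)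
    {a : N → Set (Ordinal.{0} × Ordinal.{0})} (ξ : N)
    (hspec : ∀ η, srel δ η ξ → a η ∈ A η ∧ CondCompat (POf w δ a η) (a η)) :
    IsCond μ κ (POf w δ a ξ) := by
  refine ⟨?_, ?_, ?_⟩
  · rintro x (hx | hx)
    · obtain ⟨⟨η, hs⟩, hxa⟩ := Set.mem_iUnion.1 hx
      exact ((hA η).1 _ (hspec η hs).1).1 x hxa
    · obtain ⟨η, hlt, rfl⟩ := hx
      refine ⟨hδμ η, ?_⟩
      exact vOf_lt κ A w δ hreg hν hw fun η' h' =>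
        (hspec η' (srel_of_lt (by rw [h']; exact hlt))).1
  · rintro x (hx | hx) y (hy | hy) hxy
    · obtain ⟨⟨η1, hs1⟩, hx⟩ := Set.mem_iUnion.1 hx
      obtain ⟨⟨η2, hs2⟩, hy⟩ := Set.mem_iUnion.1 hy
      exact pair_compat κ μ A w δ hA (hspec η1 hs1) (hspec η2 hs2) x hx y hy hxy
    · obtain ⟨⟨η1, hs1⟩, hx⟩ := Set.mem_iUnion.1 hx
      obtain ⟨η2, hlt2, rfl⟩ := hy
      exact mixed_compat A w δ hδ (hspec η1 hs1) x hx hxy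
    · obtain ⟨η1, hlt1, rfl⟩ := hx
      obtain ⟨⟨η2, hs2⟩, hy⟩ := Set.mem_iUnion.1 hy
      exact (mixed_compat A w δ hδ (hspec η2 hs2) y hy hxy.symm).symm
    · obtain ⟨η1, hlt1, rfl⟩ := hx
      obtain ⟨η2, hlt2, rfl⟩ := hy
      simp only at hxy ⊢
      rw [hxy]
  · refine lt_of_le_of_lt (Cardinal.mk_union_le _ _)
      (Cardinal.add_lt_of_lt (Cardinal.aleph0_le_lift.2 hreg.1) ?_ ?_)
    · exact card_iUnion_lt κ μ A hreg hν hA fun η hs => (hspec η hs).1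
    · have h2 := Cardinal.mk_image_le_lift
        (f := fun η => (δ η, vOf w δ a (δ η))) (s := {η | δ η < δ ξ})
      rw [Cardinal.lift_uzero] at h2
      exact lt_of_le_of_lt h2
        (Cardinal.lift_lt.2 (lt_of_le_of_lt (Cardinal.mk_set_le {η | δ η < δ ξ}) hν))

theorem aFam_spec (hreg : κ.IsRegular) (hν : Cardinal.mk N < κ)
    (hA : ∀ ξ, IsMaxAntichainFn μ κ (A ξ)) (hw : ∀ ξ, ∀ a ∈ A ξ, w ξ a < κ.ord)
    (hδμ : ∀ ξ, δ ξ < μ) (hδ : ∀ ξ, ∀ a ∈ A ξ, ∀ x ∈ a, x.1 < δ ξ) (ξ : N) :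
    aFam A w δ ξ ∈ A ξ ∧ CondCompat (POf w δ (aFam A w δ) ξ) (aFam A w δ ξ) := by
  induction ξ using (srel_wf δ).induction with
  | _ ξ IH =>
  have hP : IsCond μ κ (POf w δ (aFam A w δ) ξ) :=
    isCond_POf κ μ A w δ hreg hν hA hw hδμ hδ ξ IH
  have hex : ∃ x ∈ A ξ, CondCompat (POf w δ (aFam A w δ) ξ) x := (hA ξ).2.2 _ hP
  rw [aFam_eq]
  unfold aBody
  rw [dif_pos hex]
  exact hex.choose_spec

end Main

end Stmt11Aux

/-- For fewer than `κ` many maximal antichains `A_ξ` of `Fn(μ, κ, <κ)` with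
attached functions `w_ξ : A_ξ → κ` and ordinals `δ_ξ` above the supports of the `A_ξ`, there
is a single condition `q` that, for each `ξ`, extends some `a ∈ A_ξ` and takes a value above
`w_ξ(a)` at `δ_ξ`. -/
theorem stmt_11 (κ : Cardinal.{0}) (hreg : κ.IsRegular) (hκ : Cardinal.aleph0 < κ)
    (μ : Ordinal.{0}) {N : Type} (hν : Cardinal.mk N < κ)
    (A : N → Set (Set (Ordinal.{0} × Ordinal.{0})))
    (hA : ∀ ξ, IsMaxAntichainFn μ κ (A ξ))
    (w : N → Set (Ordinal.{0} × Ordinal.{0}) → Ordinal.{0})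
    (hw : ∀ ξ, ∀ a ∈ A ξ, w ξ a < κ.ord)
    (δ : N → Ordinal.{0}) (hδμ : ∀ ξ, δ ξ < μ)
    (hδ : ∀ ξ, ∀ a ∈ A ξ, ∀ x ∈ a, x.1 < δ ξ) :
    ∃ q, IsCond μ κ q ∧
      ∀ ξ, ∃ a ∈ A ξ, a ⊆ q ∧ ∃ b, (δ ξ, b) ∈ q ∧ w ξ a < b := by
  set a := aFam A w δ with ha
  have spec : ∀ ξ, a ξ ∈ A ξ ∧ CondCompat (POf w δ a ξ) (a ξ) :=
    aFam_spec κ μ A w δ hreg hν hA hw hδμ hδ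
  set q : Set (Ordinal.{0} × Ordinal.{0}) :=
    (⋃ η : (Set.univ : Set N), a η.1) ∪
      (Set.range fun η => (δ η, vOf w δ a (δ η))) with hq
  have hsubq : ∀ ξ, a ξ ⊆ q := fun ξ x hx =>
    Set.mem_union_left _ (Set.mem_iUnion.2 ⟨⟨ξ, trivial⟩, hx⟩)
  refine ⟨q, ⟨?_, ?_, ?_⟩, ?_⟩
  · rintro x (hx | hx)
    · obtain ⟨η, hxa⟩ := Set.mem_iUnion.1 hx
      exact ((hA η.1).1 _ (spec η.1).1).1 x hxa
    · obtain ⟨η, rfl⟩ := hx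
      exact ⟨hδμ η, vOf_lt κ A w δ hreg hν hw fun η' _ => (spec η').1⟩
  · rintro x (hx | hx) y (hy | hy) hxy
    · obtain ⟨η1, hx1⟩ := Set.mem_iUnion.1 hx
      obtain ⟨η2, hy1⟩ := Set.mem_iUnion.1 hy
      exact pair_compat κ μ A w δ hA (spec η1.1) (spec η2.1) x hx1 y hy1 hxy
    · obtain ⟨η1, hx1⟩ := Set.mem_iUnion.1 hx
      obtain ⟨η2, rfl⟩ := hy
      exact mixed_compat A w δ hδ (spec η1.1) x hx1 hxy
    · obtain ⟨η1, rfl⟩ := hx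
      obtain ⟨η2, hy1⟩ := Set.mem_iUnion.1 hy
      exact (mixed_compat A w δ hδ (spec η2.1) y hy1 hxy.symm).symm
    · obtain ⟨η1, rfl⟩ := hx
      obtain ⟨η2, rfl⟩ := hy
      simp only at hxy ⊢
      rw [hxy]
  · refine lt_of_le_of_lt (Cardinal.mk_union_le _ _)
      (Cardinal.add_lt_of_lt (Cardinal.aleph0_le_lift.2 hreg.1) ?_ ?_)
    · exact card_iUnion_lt κ μ A hreg hν hA fun η _ => (spec η).1
    · refine lt_of_le_of_lt ?_ (Cardinal.lift_lt.2 hν)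
      have := Cardinal.mk_range_le_lift (f := fun η => (δ η, vOf w δ a (δ η)))
      rwa [Cardinal.lift_uzero] at this
  · intro ξ
    refine ⟨a ξ, (spec ξ).1, hsubq ξ, vOf w δ a (δ ξ),
      Set.mem_union_right _ ⟨ξ, rfl⟩, ?_⟩
    have h1 : w ξ (a ξ) < Order.succ (w ξ (a ξ)) := Order.lt_succ _
    have h2 : Order.succ (w ξ (a ξ)) ≤ vOf w δ a (δ ξ) :=
      Ordinal.le_iSup (fun η : {η : N // δ η = δ ξ} => Order.succ (w η.1 (a η.1))) ⟨ξ, rfl⟩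
    exact lt_of_lt_of_le h1 h2
end

section
/- Let (L, (ℐ_x)_{x∈L}) be a template and A ⊆ L. Then: (1) if B ∈ ℐ↾A, then for every C ⊆ B, C ∈ ℐ↾B if and only if C ∈ ℐ↾A; (2) if B ∈ ℐ↾A, then Dp_{ℐ↾A}(B) = Dp(B); (3) if B ⊆ A then Dp(B) ≤ Dp(A), and if additionally B ∈ ℐ↾A and B ⊊ A then Dp(B) < Dp(A); (4) if B = B₀ ∪ {x} ⊆ A with x ∉ B₀ and both B₀ and B belong to ℐ↾A, then Dp(B) = Dp(B₀) + 1. -/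
set_option linter.unusedSectionVars false


open scoped Classical

/-- The trace of a family of sets on `A`: `ℐ↾A = {B ∩ A : B ∈ ℐ}`. -/
def trace {L : Type u} (I : Set (Set L)) (A : Set L) : Set (Set L) :=
  {C | ∃ B ∈ I, C = B ∩ A}

/-- The depth of `C` in the family `F`: its ordinal rank with respect to strict inclusion
on `F` (defined whenever `C ∈ F` and strict inclusion is well-founded on `F`). -/
noncomputable def dpIn {L : Type u} (F : Set (Set L)) (C : Set L) : Ordinal.{u} :=
  if h : C ∈ F ∧ WellFounded (fun X Y : F => (X : Set L) ⊂ (Y : Set L)) then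
    @IsWellFounded.rank F (fun X Y : F => (X : Set L) ⊂ (Y : Set L)) ⟨h.2⟩ ⟨C, h.1⟩
  else 0

/-- The family `ℐ = ⋃_{x ∈ L} ℐ_x ∪ {L}` associated with a template. -/
def bigI {L : Type u} (I : L → Set (Set L)) : Set (Set L) :=
  (⋃ x, I x) ∪ {Set.univ}

/-- The depth of `A ⊆ L`: `Dp(A) = Dp_{ℐ↾A}(A)`. -/
noncomputable def Dp {L : Type u} (I : L → Set (Set L)) (A : Set L) : Ordinal.{u} :=
  dpIn (trace (bigI I) A) A

section Aux

variable {L : Type u} [LinearOrder L] {I : L → Set (Set L)}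

lemma univ_mem_bigI : (Set.univ : Set L) ∈ bigI I := Or.inr rfl

lemma self_mem_trace (A : Set L) : A ∈ trace (bigI I) A :=
  ⟨Set.univ, univ_mem_bigI, (Set.univ_inter A).symm⟩

lemma trace_sub {A B : Set L} (h : B ∈ trace (bigI I) A) : B ⊆ A := by
  obtain ⟨D, -, rfl⟩ := h
  exact Set.inter_subset_right

lemma inter_mem_bigI
    (hinter : ∀ x : L, ∀ B ∈ I x, ∀ C ∈ I x, B ∩ C ∈ I x)
    (hmono : ∀ x y : L, x < y → I x ⊆ I y)
    {B C : Set L} (hB : B ∈ bigI I) (hC : C ∈ bigI I) : B ∩ C ∈ bigI I := by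
  rcases hB with hB | hB
  · rcases hC with hC | hC
    · obtain ⟨x, hx⟩ := Set.mem_iUnion.1 hB
      obtain ⟨y, hy⟩ := Set.mem_iUnion.1 hC
      rcases lt_trichotomy x y with h | h | h
      · exact Or.inl (Set.mem_iUnion.2 ⟨y, hinter y _ (hmono x y h hx) _ hy⟩)
      · subst h; exact Or.inl (Set.mem_iUnion.2 ⟨x, hinter x _ hx _ hy⟩)
      · exact Or.inl (Set.mem_iUnion.2 ⟨x, hinter x _ hx _ (hmono y x h hy)⟩)
    · rw [Set.mem_singleton_iff.1 hC, Set.inter_univ]; exact Or.inl hB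
  · rw [Set.mem_singleton_iff.1 hB, Set.univ_inter]; exact hC

lemma mem_trace_trans
    (hinter : ∀ x : L, ∀ B ∈ I x, ∀ C ∈ I x, B ∩ C ∈ I x)
    (hmono : ∀ x y : L, x < y → I x ⊆ I y)
    {A B C : Set L} (hB : B ∈ trace (bigI I) A) (hC : C ∈ trace (bigI I) B) :
    C ∈ trace (bigI I) A := by
  obtain ⟨E, hE, rfl⟩ := hB
  obtain ⟨D, hD, rfl⟩ := hC
  exact ⟨D ∩ E, inter_mem_bigI hinter hmono hD hE, by rw [Set.inter_assoc]⟩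

lemma mem_trace_of_subset {A B C : Set L} (hBA : B ⊆ A)
    (hC : C ∈ trace (bigI I) A) (hCB : C ⊆ B) : C ∈ trace (bigI I) B := by
  obtain ⟨D, hD, rfl⟩ := hC
  refine ⟨D, hD, Set.Subset.antisymm ?_ ?_⟩
  · exact Set.subset_inter Set.inter_subset_left hCB
  · exact Set.inter_subset_inter (subset_refl D) hBA

lemma wf_trace
    (hinter : ∀ x : L, ∀ B ∈ I x, ∀ C ∈ I x, B ∩ C ∈ I x)
    (hmono : ∀ x y : L, x < y → I x ⊆ I y)
    (hwf : WellFounded fun X Y : (bigI I : Set (Set L)) => (X : Set L) ⊂ (Y : Set L))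
    (A : Set L) :
    WellFounded (fun X Y : (trace (bigI I) A : Set (Set L)) => (X : Set L) ⊂ (Y : Set L)) := by
  have key : ∀ D : (bigI I : Set (Set L)),
      Acc (fun X Y : (trace (bigI I) A : Set (Set L)) => (X : Set L) ⊂ (Y : Set L))
        ⟨(D : Set L) ∩ A, ⟨D, D.2, rfl⟩⟩ := by
    intro D
    refine hwf.induction (C := fun D => Acc
      (fun X Y : (trace (bigI I) A : Set (Set L)) => (X : Set L) ⊂ (Y : Set L))
      ⟨(D : Set L) ∩ A, ⟨D, D.2, rfl⟩⟩) D ?_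
    rintro D IH
    constructor
    rintro ⟨C, hC⟩ hlt
    obtain ⟨E, hE, rfl⟩ := hC
    simp only at hlt
    have hFD : (E ∩ (D : Set L)) ⊂ (D : Set L) := by
      constructor
      · exact Set.inter_subset_right
      · intro h
        exact hlt.2 fun y hy => ⟨(h hy.1).1, hy.2⟩
    have hEq : (E ∩ (D : Set L)) ∩ A = E ∩ A := by
      apply Set.Subset.antisymm
      · exact fun y hy => ⟨hy.1.1, hy.2⟩
      · exact fun y hy => ⟨⟨hy.1, (hlt.1 hy).1⟩, hy.2⟩
    have hmem : E ∩ (D : Set L) ∈ bigI I :=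
      inter_mem_bigI hinter hmono hE D.2
    have h2 : (⟨(E ∩ (D : Set L)) ∩ A, ⟨E ∩ (D : Set L), hmem, rfl⟩⟩ :
        (trace (bigI I) A : Set (Set L))) = ⟨E ∩ A, ⟨E, hE, rfl⟩⟩ := Subtype.ext hEq
    exact h2 ▸ IH ⟨E ∩ (D : Set L), hmem⟩ hFD
  constructor
  rintro ⟨C, hC⟩
  obtain ⟨D, hD, rfl⟩ := hC
  exact key ⟨D, hD⟩

/-- Rank with the well-foundedness proof given explicitly. -/
noncomputable def rk (F : Set (Set L))
    (hw : WellFounded fun X Y : F => (X : Set L) ⊂ (Y : Set L)) (C : F) : Ordinal.{u} :=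
  (hw.apply C).rank

lemma rk_eq {F : Set (Set L)}
    (hw : WellFounded fun X Y : F => (X : Set L) ⊂ (Y : Set L)) (C : F) :
    rk F hw C = ⨆ b : {b : F // (b : Set L) ⊂ (C : Set L)}, Order.succ (rk F hw b) :=
  Acc.rank_eq _

lemma rk_lt {F : Set (Set L)}
    (hw : WellFounded fun X Y : F => (X : Set L) ⊂ (Y : Set L)) {X Y : F}
    (h : (X : Set L) ⊂ (Y : Set L)) : rk F hw X < rk F hw Y :=
  Acc.rank_lt_of_rel (hw.apply Y) h

lemma dpIn_eq_rk {F : Set (Set L)} {C : Set L} (hC : C ∈ F)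
    (hw : WellFounded fun X Y : F => (X : Set L) ⊂ (Y : Set L)) :
    dpIn F C = rk F hw ⟨C, hC⟩ := by
  rw [dpIn, dif_pos ⟨hC, hw⟩]
  rfl

section Main

variable (hinter : ∀ x : L, ∀ B ∈ I x, ∀ C ∈ I x, B ∩ C ∈ I x)
  (hmono : ∀ x y : L, x < y → I x ⊆ I y)
  (hwf : WellFounded fun X Y : (bigI I : Set (Set L)) => (X : Set L) ⊂ (Y : Set L))

include hinter hmono hwf

lemma rk_trace_eq :
    ∀ o : Ordinal.{u}, ∀ A B C : Set L, ∀ _ : B ∈ trace (bigI I) A,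
      ∀ hCA : C ∈ trace (bigI I) A, ∀ hCB : C ∈ trace (bigI I) B,
      rk _ (wf_trace hinter hmono hwf A) ⟨C, hCA⟩ = o →
      rk _ (wf_trace hinter hmono hwf B) ⟨C, hCB⟩ = o := by
  intro o
  induction o using Ordinal.induction with
  | h o IH =>
  intro A B C hB hCA hCB hrk
  subst hrk
  apply le_antisymm
  · rw [rk_eq]
    apply Ordinal.iSup_le
    rintro ⟨⟨C', hC'B⟩, hlt⟩
    simp only at hlt ⊢
    have hC'A : C' ∈ trace (bigI I) A := mem_trace_trans hinter hmono hB hC'B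
    have h1 : rk _ (wf_trace hinter hmono hwf A) ⟨C', hC'A⟩ <
        rk _ (wf_trace hinter hmono hwf A) ⟨C, hCA⟩ := rk_lt _ hlt
    have h2 : rk _ (wf_trace hinter hmono hwf B) ⟨C', hC'B⟩ =
        rk _ (wf_trace hinter hmono hwf A) ⟨C', hC'A⟩ :=
      IH _ h1 A B C' hB hC'A hC'B rfl
    rw [h2]
    exact Order.succ_le_of_lt h1
  · rw [rk_eq]
    apply Ordinal.iSup_le
    rintro ⟨⟨C', hC'A⟩, hlt⟩
    simp only at hlt ⊢
    have hC'B : C' ∈ trace (bigI I) B :=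
      mem_trace_of_subset (trace_sub hB) hC'A (hlt.1.trans (trace_sub hCB))
    have h1 : rk _ (wf_trace hinter hmono hwf A) ⟨C', hC'A⟩ <
        rk _ (wf_trace hinter hmono hwf A) ⟨C, hCA⟩ := rk_lt _ hlt
    have h2 : rk _ (wf_trace hinter hmono hwf B) ⟨C', hC'B⟩ =
        rk _ (wf_trace hinter hmono hwf A) ⟨C', hC'A⟩ :=
      IH _ h1 A B C' hB hC'A hC'B rfl
    rw [← h2]
    exact Order.succ_le_of_lt (rk_lt _ hlt)

lemma Dp_eq_rk (A : Set L) :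
    Dp I A = rk _ (wf_trace hinter hmono hwf A) ⟨A, self_mem_trace A⟩ :=
  dpIn_eq_rk _ _

lemma dpIn_trace {A B : Set L} (hB : B ∈ trace (bigI I) A) :
    dpIn (trace (bigI I) A) B = Dp I B := by
  rw [dpIn_eq_rk hB (wf_trace hinter hmono hwf A), Dp_eq_rk hinter hmono hwf]
  exact (rk_trace_eq hinter hmono hwf _ A B B hB hB (self_mem_trace B) rfl).symm

lemma Dp_strict {A B : Set L} (hBT : B ∈ trace (bigI I) A) (hBA : B ⊂ A) :
    Dp I B < Dp I A := by
  rw [← dpIn_trace hinter hmono hwf hBT, Dp_eq_rk hinter hmono hwf,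
    dpIn_eq_rk hBT (wf_trace hinter hmono hwf A)]
  exact rk_lt _ hBA

lemma Dp_mono :
    ∀ o : Ordinal.{u}, ∀ A : Set L, Dp I A = o → ∀ B : Set L, B ⊆ A → Dp I B ≤ o := by
  intro o
  induction o using Ordinal.induction with
  | h o IH =>
  intro A hA B hBA
  subst hA
  rw [Dp_eq_rk hinter hmono hwf B, rk_eq]
  apply Ordinal.iSup_le
  rintro ⟨⟨C, hCB⟩, hlt⟩
  simp only at hlt ⊢
  have hrkC : rk _ (wf_trace hinter hmono hwf B) ⟨C, hCB⟩ = Dp I C := by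
    rw [← dpIn_eq_rk hCB (wf_trace hinter hmono hwf B)]
    exact dpIn_trace hinter hmono hwf hCB
  rw [hrkC]
  obtain ⟨D, hD, hCD⟩ := hCB
  have hC'A : D ∩ A ∈ trace (bigI I) A := ⟨D, hD, rfl⟩
  have hCC' : C ⊆ D ∩ A := by
    rw [hCD]; exact Set.inter_subset_inter (subset_refl D) hBA
  have hne : D ∩ A ≠ A := by
    intro h
    have hAD : A ⊆ D := by rw [← h]; exact Set.inter_subset_left
    refine hlt.ne (Set.Subset.antisymm hlt.1 fun y hy => ?_)
    rw [hCD]; exact ⟨hAD (hBA hy), hy⟩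
  have hltDp : Dp I (D ∩ A) < Dp I A :=
    Dp_strict hinter hmono hwf hC'A (ssubset_of_subset_of_ne Set.inter_subset_right hne)
  have hle : Dp I C ≤ Dp I (D ∩ A) := IH _ hltDp (D ∩ A) rfl C hCC'
  exact Order.succ_le_of_lt (lt_of_le_of_lt hle hltDp)

lemma Dp_union_aux :
    ∀ o : Ordinal.{u}, ∀ B₀ : Set L, Dp I B₀ = o → ∀ x : L, x ∉ B₀ →
      B₀ ∈ trace (bigI I) (B₀ ∪ {x}) → Dp I (B₀ ∪ {x}) = o + 1 := by
  intro o
  induction o using Ordinal.induction with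
  | h o IH =>
  intro B₀ hB₀o x hx hB₀T
  subst hB₀o
  have hB₀sub : B₀ ⊆ B₀ ∪ {x} := Set.subset_union_left
  have hB₀ss : B₀ ⊂ B₀ ∪ {x} := by
    refine ⟨hB₀sub, fun h => hx (h (Set.mem_union_right _ rfl))⟩
  apply le_antisymm
  · rw [Dp_eq_rk hinter hmono hwf (B₀ ∪ {x}), rk_eq]
    apply Ordinal.iSup_le
    rintro ⟨⟨C, hCB⟩, hlt⟩
    simp only at hlt ⊢
    have hrkC : rk _ (wf_trace hinter hmono hwf (B₀ ∪ {x})) ⟨C, hCB⟩ = Dp I C := by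
      rw [← dpIn_eq_rk hCB (wf_trace hinter hmono hwf (B₀ ∪ {x}))]
      exact dpIn_trace hinter hmono hwf hCB
    rw [hrkC, Ordinal.add_one_eq_succ, Order.succ_le_succ_iff]
    by_cases hxC : x ∈ C
    · obtain ⟨D, hD, hCD⟩ := hCB
      obtain ⟨E, hE, hB₀E⟩ := hB₀T
      have hCsubD : C ⊆ D := by rw [hCD]; exact Set.inter_subset_left
      have hCsubB : C ⊆ B₀ ∪ {x} := hlt.1
      have hC0B₀ : C ∩ B₀ ∈ trace (bigI I) B₀ := by
        refine ⟨D, hD, ?_⟩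
        rw [hCD, Set.inter_assoc, Set.inter_eq_right.2 hB₀sub]
      have hC0C : C ∩ B₀ ∈ trace (bigI I) C := by
        refine ⟨D ∩ E, inter_mem_bigI hinter hmono hD hE, ?_⟩
        ext y
        constructor
        · rintro ⟨hyC, hyB₀⟩
          have hyE : y ∈ E := by
            have : y ∈ E ∩ (B₀ ∪ {x}) := hB₀E ▸ hyB₀
            exact this.1
          exact ⟨⟨hCsubD hyC, hyE⟩, hyC⟩
        · rintro ⟨⟨hyD, hyE⟩, hyC⟩
          have : y ∈ E ∩ (B₀ ∪ {x}) := ⟨hyE, hCsubB hyC⟩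
          rw [← hB₀E] at this
          exact ⟨hyC, this⟩
      have hC0ss : C ∩ B₀ ⊂ B₀ := by
        refine ⟨Set.inter_subset_right, fun h => hlt.2 fun y hy => ?_⟩
        rcases hy with hy | hy
        · exact (h hy).1
        · rw [Set.mem_singleton_iff.1 hy]; exact hxC
      have hDpC0lt : Dp I (C ∩ B₀) < Dp I B₀ := Dp_strict hinter hmono hwf hC0B₀ hC0ss
      have hxC0 : x ∉ C ∩ B₀ := fun h => hx h.2
      have hCeq : C = (C ∩ B₀) ∪ {x} := by
        ext y
        constructor
        · intro hy
          rcases hCsubB hy with h1 | h1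
          · exact Or.inl ⟨hy, h1⟩
          · exact Or.inr h1
        · rintro (hy | hy)
          · exact hy.1
          · rw [Set.mem_singleton_iff.1 hy]; exact hxC
      have hC0T : C ∩ B₀ ∈ trace (bigI I) ((C ∩ B₀) ∪ {x}) := hCeq ▸ hC0C
      have hstep := IH _ hDpC0lt (C ∩ B₀) rfl x hxC0 hC0T
      rw [hCeq, hstep, Ordinal.add_one_eq_succ]
      exact Order.succ_le_of_lt hDpC0lt
    · have hCB₀ : C ⊆ B₀ := by
        intro y hy
        rcases hlt.1 hy with h1 | h1
        · exact h1
        · exact absurd (Set.mem_singleton_iff.1 h1 ▸ hy) hxC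
      exact Dp_mono hinter hmono hwf _ B₀ rfl C hCB₀
  · have h2 : rk _ (wf_trace hinter hmono hwf (B₀ ∪ {x})) ⟨B₀, hB₀T⟩ = Dp I B₀ := by
      rw [← dpIn_eq_rk hB₀T (wf_trace hinter hmono hwf (B₀ ∪ {x}))]
      exact dpIn_trace hinter hmono hwf hB₀T
    rw [Dp_eq_rk hinter hmono hwf (B₀ ∪ {x}), Ordinal.add_one_eq_succ]
    exact Order.succ_le_of_lt (h2 ▸ rk_lt _ hB₀ss)

end Main

end Aux

/-- Basic properties of the depth function of a template. -/
theorem stmt_12 {L : Type u} [LinearOrder L] (I : L → Set (Set L))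
    (hsubset : ∀ x : L, ∀ B ∈ I x, ∀ y ∈ B, y < x)
    (hempty : ∀ x : L, ∅ ∈ I x)
    (hsingle : ∀ x y : L, y < x → ({y} : Set L) ∈ I x)
    (hunion : ∀ x : L, ∀ B ∈ I x, ∀ C ∈ I x, B ∪ C ∈ I x)
    (hinter : ∀ x : L, ∀ B ∈ I x, ∀ C ∈ I x, B ∩ C ∈ I x)
    (hmono : ∀ x y : L, x < y → I x ⊆ I y)
    (hwf : WellFounded fun X Y : (bigI I : Set (Set L)) => (X : Set L) ⊂ (Y : Set L)) :
    -- (1)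
    (∀ A B : Set L, B ∈ trace (bigI I) A → ∀ C ⊆ B,
      (C ∈ trace (bigI I) B ↔ C ∈ trace (bigI I) A)) ∧
    -- (2)
    (∀ A B : Set L, B ∈ trace (bigI I) A → dpIn (trace (bigI I) A) B = Dp I B) ∧
    -- (3)
    (∀ A B : Set L, B ⊆ A →
      Dp I B ≤ Dp I A ∧ (B ∈ trace (bigI I) A → B ⊂ A → Dp I B < Dp I A)) ∧
    -- (4)
    (∀ A B₀ : Set L, ∀ x : L, x ∉ B₀ → B₀ ∪ {x} ⊆ A →
      B₀ ∈ trace (bigI I) A → B₀ ∪ {x} ∈ trace (bigI I) A →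
      Dp I (B₀ ∪ {x}) = Dp I B₀ + 1) := by
  refine ⟨?_, ?_, ?_, ?_⟩
  · intro A B hB C hCB
    exact ⟨fun h => mem_trace_trans hinter hmono hB h,
      fun h => mem_trace_of_subset (trace_sub hB) h hCB⟩
  · intro A B hB
    exact dpIn_trace hinter hmono hwf hB
  · intro A B hBA
    exact ⟨Dp_mono hinter hmono hwf _ A rfl B hBA,
      fun hBT hss => Dp_strict hinter hmono hwf hBT hss⟩
  · intro A B₀ x hx hBA hB₀T hBT
    exact Dp_union_aux hinter hmono hwf _ B₀ rfl x hx
      (mem_trace_of_subset (trace_sub hBT) hB₀T Set.subset_union_left)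
end
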